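/- For every n ≥ 1 and every t ∈ ℝ, the function t ↦ H_n(t) is differentiable and ∂_t H_n = (ξ_{n,n−1} − ξ_{n+1,n}) H_n + H_n (ξ_{n,n−1} − ξ_{n+1,n})^T. -/

import Mathlib

open Matrix

attribute [local instance] Matrix.normedAddCommGroup Matrix.normedSpace

noncomputable section

/-- `M_p`: real `p × p` matrices. -/
abbrev Mp (p : ℕ) := Matrix (Fin p) (Fin p) ℝ

/-- The block moment matrix `M_n(t) = (m_{i,j}(t))_{0 ≤ i,j ≤ n−1}`, an `np × np` real matrix. -/
def blockM {p : ℕ} (m : ℕ → ℕ → ℝ → Mp p) (n : ℕ) (t : ℝ) :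
    Matrix (Fin n × Fin p) (Fin n × Fin p) ℝ :=
  Matrix.of fun a b => m a.1 b.1 t a.2 b.2

/-- The row of moments `(m_{n,0}(t), …, m_{n,n−1}(t))`, a `p × np` matrix. -/
def rowm {p : ℕ} (m : ℕ → ℕ → ℝ → Mp p) (n : ℕ) (t : ℝ) : Matrix (Fin p) (Fin n × Fin p) ℝ :=
  Matrix.of fun a b => m n b.1 t a b.2

/-- `ξ_{n,i}(t)`, defined by `(ξ_{n,0},…,ξ_{n,n−1}) = −(m_{n,0},…,m_{n,n−1}) M_n⁻¹` pointwise in `t`. -/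
def xiD {p : ℕ} (m : ℕ → ℕ → ℝ → Mp p) (n : ℕ) (i : Fin n) (t : ℝ) : Mp p :=
  Matrix.of fun a b => ((-(rowm m n t)) * (blockM m n t)⁻¹) a (i, b)

/-- `H_n(t) = m_{n,n}(t) + Σ_{i=0}^{n−1} ξ_{n,i}(t) m_{i,n}(t)`. -/
def HmatD {p : ℕ} (m : ℕ → ℕ → ℝ → Mp p) (n : ℕ) (t : ℝ) : Mp p :=
  m n n t + ∑ i : Fin n, xiD m n i t * m i n t

/-- `V_n(t) = φ_n(t) + Σ_{i=0}^{n−1} ξ_{n,i}(t) φ_i(t)`. -/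
def VD {p : ℕ} (m : ℕ → ℕ → ℝ → Mp p) (φ : ℕ → ℝ → Mp p) (n : ℕ) (t : ℝ) : Mp p :=
  φ n t + ∑ i : Fin n, xiD m n i t * φ i t

/-- `a_n(t) = −V_{n+1}(t) V_n(t)⁻¹`. -/
def aD {p : ℕ} (m : ℕ → ℕ → ℝ → Mp p) (φ : ℕ → ℝ → Mp p) (n : ℕ) (t : ℝ) : Mp p :=
  -(VD m φ (n + 1) t * (VD m φ n t)⁻¹)

/-- `P_n(t,x) = x^n I + Σ_{i=0}^{n−1} ξ_{n,i}(t) x^i`. -/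
def Ppol {p : ℕ} (m : ℕ → ℕ → ℝ → Mp p) (n : ℕ) (t : ℝ) (x : ℝ) : Mp p :=
  x ^ n • (1 : Mp p) + ∑ i : Fin n, x ^ (i : ℕ) • xiD m n i t

/-!
`H_n = ⟨P_n, P_n⟩` for the matrix-valued form on matrix polynomials with `⟨x^k, x^l⟩ = m_{k,l}`,
and `P_n` is orthogonal to all polynomials of degree `< n`. When `t` moves, the coefficients of
`P_n` move by a polynomial of degree `< n`, which pairs to zero with `P_n`, while the moment rule
`∂ m_{k,l} = m_{k+1,l} + m_{k,l+1}` differentiates the form into `⟨x P_n, P_n⟩ + ⟨P_n, x P_n⟩`.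
Finally `x P_n = P_{n+1} + (ξ_{n,n−1} − ξ_{n+1,n}) P_n + (degree < n)`, so by orthogonality
`⟨x P_n, P_n⟩ = (ξ_{n,n−1} − ξ_{n+1,n}) H_n`.
-/

open Finset

namespace MatrixOrthPoly

variable {ι R : Type*} [CommRing R]

def mulX (a : ℕ → Matrix ι ι R) : ℕ → Matrix ι ι R
  | 0 => 0
  | k + 1 => a k

theorem sum_range_succ_mulX {M : Type*} [AddCommMonoid M] (F : ℕ → Matrix ι ι R → M)
    (hF : ∀ k, F k 0 = 0) {N : ℕ} {a : ℕ → Matrix ι ι R} (ha : a N = 0) :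
    ∑ k ∈ range (N + 1), F k (mulX a k) = ∑ k ∈ range (N + 1), F (k + 1) (a k) := by
  rw [Finset.sum_range_succ', Finset.sum_range_succ, ha, hF]
  simp [mulX, hF]

variable [Fintype ι]

/-- `⟨A, x ^ j⟩` in the notation of `pairing`. -/
def moment (μ : ℕ → ℕ → Matrix ι ι R) (N : ℕ) (a : ℕ → Matrix ι ι R) (j : ℕ) :
    Matrix ι ι R :=
  ∑ k ∈ range N, a k * μ k j

/-- The matrix-valued form `⟨A, B⟩` of `A = ∑_{k < N} a k x ^ k` and `B = ∑_{l < N} b l x ^ l`,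
with `⟨x ^ k, x ^ l⟩ = μ k l`. -/
def pairing (μ : ℕ → ℕ → Matrix ι ι R) (N : ℕ) (a b : ℕ → Matrix ι ι R) : Matrix ι ι R :=
  ∑ k ∈ range N, ∑ l ∈ range N, a k * μ k l * (b l)ᵀ

variable {μ : ℕ → ℕ → Matrix ι ι R} {N : ℕ}

theorem pairing_eq_sum_moment (a b : ℕ → Matrix ι ι R) :
    pairing μ N a b = ∑ l ∈ range N, moment μ N a l * (b l)ᵀ := by
  simp only [pairing, moment, Finset.sum_mul]
  exact Finset.sum_comm

theorem pairing_transpose (hμ : ∀ k l, μ k l = (μ l k)ᵀ) (a b : ℕ → Matrix ι ι R) :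
    (pairing μ N a b)ᵀ = pairing μ N b a := by
  simp only [pairing, transpose_sum, transpose_mul, transpose_transpose, ← hμ, mul_assoc]
  exact Finset.sum_comm

theorem pairing_add_left (a a' b : ℕ → Matrix ι ι R) :
    pairing μ N (a + a') b = pairing μ N a b + pairing μ N a' b := by
  simp only [pairing, Pi.add_apply, add_mul, Finset.sum_add_distrib]

theorem pairing_mul_left (c : Matrix ι ι R) (a b : ℕ → Matrix ι ι R) :
    pairing μ N (fun k => c * a k) b = c * pairing μ N a b := by
  simp only [pairing, Finset.mul_sum, mul_assoc]

theorem pairing_eq_moment_mul {a b : ℕ → Matrix ι ι R} {d : ℕ}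
    (ha : ∀ j < d, moment μ N a j = 0) (hb : ∀ k, d < k → b k = 0) (hd : d < N) :
    pairing μ N a b = moment μ N a d * (b d)ᵀ := by
  rw [pairing_eq_sum_moment]
  refine Finset.sum_eq_single_of_mem d (mem_range.2 hd) fun l _ hl => ?_
  rcases hl.lt_or_gt with hl | hl
  · rw [ha l hl, zero_mul]
  · rw [hb l hl, transpose_zero, mul_zero]

theorem pairing_shift {a b : ℕ → Matrix ι ι R} (ha : a N = 0) (hb : b N = 0) :
    pairing (fun k l => μ (k + 1) l + μ k (l + 1)) (N + 1) a b
      = pairing μ (N + 1) (mulX a) b + pairing μ (N + 1) a (mulX b) := by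
  have hleft : pairing μ (N + 1) (mulX a) b
      = ∑ k ∈ range (N + 1), ∑ l ∈ range (N + 1), a k * μ (k + 1) l * (b l)ᵀ := by
    rw [pairing, Finset.sum_comm]
    conv_rhs => rw [Finset.sum_comm]
    refine Finset.sum_congr rfl fun l _ => ?_
    exact sum_range_succ_mulX (fun k x => x * μ k l * (b l)ᵀ) (by simp) ha
  have hright : pairing μ (N + 1) a (mulX b)
      = ∑ k ∈ range (N + 1), ∑ l ∈ range (N + 1), a k * μ k (l + 1) * (b l)ᵀ :=
    Finset.sum_congr rfl fun k _ =>
      sum_range_succ_mulX (fun l y => a k * μ k l * yᵀ) (by simp) hb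
  rw [hleft, hright]
  simp only [pairing, mul_add, add_mul, Finset.sum_add_distrib]

variable [DecidableEq ι]

structure IsMonicOrthogonal (μ : ℕ → ℕ → Matrix ι ι R) (N d : ℕ) (a : ℕ → Matrix ι ι R) :
    Prop where
  coeff_self : a d = 1
  coeff_of_lt : ∀ k, d < k → a k = 0
  moment_of_lt : ∀ j < d, moment μ N a j = 0

namespace IsMonicOrthogonal

variable {a : ℕ → Matrix ι ι R} {d : ℕ}

theorem pairing_eq_zero (ha : IsMonicOrthogonal μ N d a) {b : ℕ → Matrix ι ι R}
    (hb : ∀ k, d ≤ k → b k = 0) (hd : d < N) : pairing μ N a b = 0 := by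
  rw [pairing_eq_moment_mul ha.moment_of_lt (fun k hk => hb k hk.le) hd, hb d le_rfl,
    transpose_zero, mul_zero]

theorem pairing_self (ha : IsMonicOrthogonal μ N d a) (hd : d < N) :
    pairing μ N a a = moment μ N a d := by
  rw [pairing_eq_moment_mul ha.moment_of_lt ha.coeff_of_lt hd, ha.coeff_self, transpose_one,
    mul_one]

theorem pairing_mulX_self (hμ : ∀ k l, μ k l = (μ l k)ᵀ) {n : ℕ} (hn : 1 ≤ n)
    {P Q : ℕ → Matrix ι ι R} (hP : IsMonicOrthogonal μ (n + 2) n P)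
    (hQ : IsMonicOrthogonal μ (n + 2) (n + 1) Q) :
    pairing μ (n + 2) (mulX P) P = (P (n - 1) - Q n) * pairing μ (n + 2) P P := by
  set β := P (n - 1) - Q n
  set T := mulX P - Q - fun k => β * P k
  have hT : ∀ k, n ≤ k → T k = 0 := by
    intro k hk
    obtain ⟨j, rfl⟩ : ∃ j, k = j + 1 := ⟨k - 1, by omega⟩
    simp only [T, β, Pi.sub_apply, mulX]
    rcases (by omega : n = j + 1 ∨ j = n ∨ n < j) with rfl | rfl | hj
    · rw [hP.coeff_self, mul_one, Nat.add_sub_cancel, sub_self]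
    · rw [hP.coeff_self, hQ.coeff_self, hP.coeff_of_lt _ (Nat.lt_succ_self j), mul_zero,
        sub_self, sub_zero]
    · rw [hP.coeff_of_lt j hj, hQ.coeff_of_lt (j + 1) (by omega),
        hP.coeff_of_lt (j + 1) (by omega)]
      simp
  have hdecomp : mulX P = Q + (fun k => β * P k) + T := by
    simp only [T]; abel
  have hQP : pairing μ (n + 2) Q P = 0 :=
    hQ.pairing_eq_zero (fun k hk => hP.coeff_of_lt k hk) (by omega)
  have hTP : pairing μ (n + 2) T P = 0 := by
    rw [← pairing_transpose hμ, hP.pairing_eq_zero hT (by omega), transpose_zero]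
  rw [hdecomp, pairing_add_left, pairing_add_left, pairing_mul_left, hQP, hTP, zero_add,
    add_zero]

end IsMonicOrthogonal

end MatrixOrthPoly

section Calculus

variable {ι κ ρ : Type*} {t : ℝ}

theorem hasDerivAt_matrix_iff [Fintype ι] [Fintype κ] {f : ℝ → Matrix ι κ ℝ}
    {f' : Matrix ι κ ℝ} :
    HasDerivAt f f' t ↔ ∀ i j, HasDerivAt (fun s => f s i j) (f' i j) t :=
  hasDerivAt_pi.trans (forall_congr' fun _ => hasDerivAt_pi)

theorem differentiableAt_matrix_iff [Fintype ι] [Fintype κ] {f : ℝ → Matrix ι κ ℝ} :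
    DifferentiableAt ℝ f t ↔ ∀ i j, DifferentiableAt ℝ (fun s => f s i j) t :=
  differentiableAt_pi.trans (forall_congr' fun _ => differentiableAt_pi)

theorem HasDerivAt.matrix_mul [Fintype ι] [Fintype κ] [Fintype ρ] {A : ℝ → Matrix ι κ ℝ}
    {B : ℝ → Matrix κ ρ ℝ} {A' : Matrix ι κ ℝ} {B' : Matrix κ ρ ℝ} (hA : HasDerivAt A A' t)
    (hB : HasDerivAt B B' t) :
    HasDerivAt (fun s => A s * B s) (A' * B t + A t * B') t := by
  rw [hasDerivAt_matrix_iff] at *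
  intro i j
  have h : HasDerivAt (fun s => ∑ k, A s i k * B s k j)
      (∑ k, (A' i k * B t k j + A t i k * B' k j)) t :=
    HasDerivAt.fun_sum fun k _ => (hA i k).mul (hB k j)
  simpa [mul_apply, Finset.sum_add_distrib] using h

theorem HasDerivAt.matrix_transpose [Fintype ι] [Fintype κ] {A : ℝ → Matrix ι κ ℝ}
    {A' : Matrix ι κ ℝ} (hA : HasDerivAt A A' t) : HasDerivAt (fun s => (A s)ᵀ) A'ᵀ t :=
  hasDerivAt_matrix_iff.2 fun i j => hasDerivAt_matrix_iff.1 hA j i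

theorem DifferentiableAt.matrix_mul [Fintype ι] [Fintype κ] [Fintype ρ] {A : ℝ → Matrix ι κ ℝ}
    {B : ℝ → Matrix κ ρ ℝ} (hA : DifferentiableAt ℝ A t) (hB : DifferentiableAt ℝ B t) :
    DifferentiableAt ℝ (fun s => A s * B s) t :=
  (hA.hasDerivAt.matrix_mul hB.hasDerivAt).differentiableAt

variable [Fintype ι] [DecidableEq ι] {f : ℝ → Matrix ι ι ℝ}

theorem DifferentiableAt.matrix_det (hf : DifferentiableAt ℝ f t) :
    DifferentiableAt ℝ (fun s => (f s).det) t := by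
  have hentry := differentiableAt_matrix_iff.1 hf
  simp only [det_apply, Units.smul_def, zsmul_eq_mul]
  exact .fun_sum fun σ _ => (DifferentiableAt.fun_finsetProd fun i _ => hentry _ _).const_mul _

theorem DifferentiableAt.matrix_adjugate (hf : DifferentiableAt ℝ f t) :
    DifferentiableAt ℝ (fun s => (f s).adjugate) t := by
  have hentry := differentiableAt_matrix_iff.1 hf
  refine differentiableAt_matrix_iff.2 fun i j => ?_
  simp only [adjugate_apply]
  refine DifferentiableAt.matrix_det (differentiableAt_matrix_iff.2 fun a b => ?_)
  simp only [updateRow_apply]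
  split_ifs
  · exact differentiableAt_const _
  · exact hentry a b

theorem DifferentiableAt.matrix_inv (hf : DifferentiableAt ℝ f t) (hu : IsUnit (f t)) :
    DifferentiableAt ℝ (fun s => (f s)⁻¹) t := by
  have hdet : (f t).det ≠ 0 := ((f t).isUnit_iff_isUnit_det.1 hu).ne_zero
  simp only [Matrix.inv_def, Ring.inverse_eq_inv']
  exact (hf.matrix_det.inv hdet).smul hf.matrix_adjugate

end Calculus

namespace MatrixOrthPoly

variable {ι : Type*} [Fintype ι] {N : ℕ} {t : ℝ}

theorem hasDerivAt_pairing {μ : ℝ → ℕ → ℕ → Matrix ι ι ℝ} {a b : ℝ → ℕ → Matrix ι ι ℝ}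
    {μ' : ℕ → ℕ → Matrix ι ι ℝ} {a' b' : ℕ → Matrix ι ι ℝ}
    (hμ : ∀ k l, HasDerivAt (fun s => μ s k l) (μ' k l) t)
    (ha : ∀ k, HasDerivAt (fun s => a s k) (a' k) t)
    (hb : ∀ k, HasDerivAt (fun s => b s k) (b' k) t) :
    HasDerivAt (fun s => pairing (μ s) N (a s) (b s))
      (pairing μ' N (a t) (b t) + pairing (μ t) N a' (b t) + pairing (μ t) N (a t) b') t := by
  have h := HasDerivAt.fun_sum (u := range N) fun k _ => HasDerivAt.fun_sum (u := range N)
    fun l _ => ((ha k).matrix_mul (hμ k l)).matrix_mul (hb l).matrix_transpose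
  refine h.congr_deriv ?_
  simp only [pairing, ← Finset.sum_add_distrib, add_mul]
  refine Finset.sum_congr rfl fun k _ => Finset.sum_congr rfl fun l _ => ?_
  abel

variable [DecidableEq ι]

theorem hasDerivAt_pairing_self {μ : ℝ → ℕ → ℕ → Matrix ι ι ℝ} {P : ℝ → ℕ → Matrix ι ι ℝ}
    {Q : ℕ → Matrix ι ι ℝ} {n : ℕ} (hn : 1 ≤ n) (hsym : ∀ k l, μ t k l = (μ t l k)ᵀ)
    (hμ : ∀ k l, HasDerivAt (fun s => μ s k l) (μ t (k + 1) l + μ t k (l + 1)) t)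
    (hP : ∀ s, IsMonicOrthogonal (μ s) (n + 2) n (P s))
    (hPdiff : ∀ k, DifferentiableAt ℝ (fun s => P s k) t)
    (hQ : IsMonicOrthogonal (μ t) (n + 2) (n + 1) Q) :
    HasDerivAt (fun s => pairing (μ s) (n + 2) (P s) (P s))
      ((P t (n - 1) - Q n) * pairing (μ t) (n + 2) (P t) (P t)
        + pairing (μ t) (n + 2) (P t) (P t) * (P t (n - 1) - Q n)ᵀ) t := by
  set P' := fun k => deriv (fun s => P s k) t
  have hP'_of_le : ∀ k, n ≤ k → P' k = 0 := by
    intro k hk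
    have hconst : (fun s => P s k) = fun _ => if k = n then 1 else 0 := by
      funext s
      split_ifs with h
      · exact h ▸ (hP s).coeff_self
      · exact (hP s).coeff_of_lt k (by omega)
    simp only [P', hconst]
    exact deriv_const t _
  have hPP' : pairing (μ t) (n + 2) (P t) P' = 0 := (hP t).pairing_eq_zero hP'_of_le (by omega)
  have hP'P : pairing (μ t) (n + 2) P' (P t) = 0 := by
    rw [← pairing_transpose hsym, hPP', transpose_zero]
  have hlast : P t (n + 1) = 0 := (hP t).coeff_of_lt _ (by omega)
  convert hasDerivAt_pairing (a' := P') (b' := P') hμ (fun k => (hPdiff k).hasDerivAt)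
    (fun k => (hPdiff k).hasDerivAt) using 1
  rw [hPP', hP'P, add_zero, add_zero, pairing_shift hlast hlast,
    ← pairing_transpose hsym (mulX (P t)), (hP t).pairing_mulX_self hsym hn hQ, transpose_mul,
    pairing_transpose hsym]

end MatrixOrthPoly

open MatrixOrthPoly

section Moments

variable {p : ℕ} {m : ℕ → ℕ → ℝ → Mp p} {t : ℝ}

/-- The coefficient of `x ^ k` in `P_n(t, x)`. -/
def pCoeff (m : ℕ → ℕ → ℝ → Mp p) (n : ℕ) (t : ℝ) (k : ℕ) : Mp p :=
  if h : k < n then xiD m n ⟨k, h⟩ t else if k = n then 1 else 0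

theorem sum_xiD_mul_eq_neg {n : ℕ} (hM : IsUnit (blockM m n t)) (j : Fin n) :
    ∑ i : Fin n, xiD m n i t * m i j t = -m n j t := by
  have hinv : -rowm m n t * (blockM m n t)⁻¹ * blockM m n t = -rowm m n t := by
    rw [Matrix.mul_assoc, nonsing_inv_mul _ ((blockM m n t).isUnit_iff_isUnit_det.1 hM),
      Matrix.mul_one]
  ext a b
  have hab := congrFun (congrFun hinv a) (j, b)
  simp only [Matrix.mul_apply, Fintype.sum_prod_type, blockM, rowm, Matrix.of_apply,
    Matrix.neg_apply] at hab
  simp only [Matrix.sum_apply, Matrix.mul_apply, xiD, Matrix.of_apply, Matrix.neg_apply,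
    Fintype.sum_prod_type, blockM, rowm]
  exact hab

theorem moment_pCoeff {n N : ℕ} (hnN : n < N) (j : ℕ) :
    moment (fun i j => m i j t) N (pCoeff m n t) j
      = m n j t + ∑ i : Fin n, xiD m n i t * m i j t := by
  have hzero : ∀ k ∈ range N, k ∉ range (n + 1) → pCoeff m n t k * m k j t = 0 := by
    intro k _ hk
    have hnk : n < k := by simpa using hk
    simp [pCoeff, hnk.not_gt, hnk.ne']
  rw [moment, ← Finset.sum_subset (range_subset_range.2 hnN) hzero, Finset.sum_range_succ,
    add_comm, ← Fin.sum_univ_eq_sum_range]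
  simp [pCoeff]

theorem isMonicOrthogonal_pCoeff {n N : ℕ} (hM : IsUnit (blockM m n t)) (hnN : n < N) :
    IsMonicOrthogonal (fun i j => m i j t) N n (pCoeff m n t) where
  coeff_self := by simp [pCoeff]
  coeff_of_lt k hk := by simp [pCoeff, hk.not_gt, hk.ne']
  moment_of_lt j hj := by
    rw [moment_pCoeff hnN, sum_xiD_mul_eq_neg hM ⟨j, hj⟩, add_neg_cancel]

theorem HmatD_eq_pairing {n : ℕ} (hM : IsUnit (blockM m n t)) :
    HmatD m n t = pairing (fun i j => m i j t) (n + 2) (pCoeff m n t) (pCoeff m n t) := by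
  rw [(isMonicOrthogonal_pCoeff hM (by omega)).pairing_self (by omega), moment_pCoeff (by omega),
    HmatD]

theorem differentiableAt_xiD {n : ℕ} (hm : ∀ i j, DifferentiableAt ℝ (m i j) t)
    (hM : IsUnit (blockM m n t)) (i : Fin n) : DifferentiableAt ℝ (xiD m n i) t := by
  have hblock : DifferentiableAt ℝ (blockM m n) t :=
    differentiableAt_matrix_iff.2 fun a b => differentiableAt_matrix_iff.1 (hm a.1 b.1) a.2 b.2
  have hrow : DifferentiableAt ℝ (rowm m n) t :=
    differentiableAt_matrix_iff.2 fun a b => differentiableAt_matrix_iff.1 (hm n b.1) a b.2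
  have hprod := hrow.neg.matrix_mul (hblock.matrix_inv hM)
  exact differentiableAt_matrix_iff.2 fun a b => differentiableAt_matrix_iff.1 hprod a (i, b)

theorem differentiableAt_pCoeff {n : ℕ} (hm : ∀ i j, DifferentiableAt ℝ (m i j) t)
    (hM : IsUnit (blockM m n t)) (k : ℕ) : DifferentiableAt ℝ (fun s => pCoeff m n s k) t := by
  unfold pCoeff
  split_ifs with hk
  · exact differentiableAt_xiD hm hM ⟨k, hk⟩
  all_goals exact differentiableAt_const _

end Moments

/-- For every `n ≥ 1` and every `t ∈ ℝ`, `t ↦ H_n(t)` is differentiable and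
`∂_t H_n = (ξ_{n,n−1} − ξ_{n+1,n}) H_n + H_n (ξ_{n,n−1} − ξ_{n+1,n})ᵀ`. -/
theorem stmt10 {p : ℕ} (m : ℕ → ℕ → ℝ → Mp p)
    (hsym : ∀ i j t, m i j t = (m j i t)ᵀ)
    (hderiv : ∀ i j t, HasDerivAt (m i j) (m (i + 1) j t + m i (j + 1) t) t)
    (hM : ∀ n t, IsUnit (blockM m n t))
    (n : ℕ) (hn : 1 ≤ n) :
    ∀ t : ℝ,
      HasDerivAt (HmatD m n)
        ((xiD m n ⟨n - 1, by omega⟩ t - xiD m (n + 1) ⟨n, by omega⟩ t) * HmatD m n t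
          + HmatD m n t * (xiD m n ⟨n - 1, by omega⟩ t - xiD m (n + 1) ⟨n, by omega⟩ t)ᵀ) t := by
  intro t
  have hβ : pCoeff m n t (n - 1) - pCoeff m (n + 1) t n
      = xiD m n ⟨n - 1, by omega⟩ t - xiD m (n + 1) ⟨n, by omega⟩ t := by
    simp [pCoeff, show n - 1 < n by omega]
  have hH : HmatD m n = fun s => pairing (fun i j => m i j s) (n + 2) (pCoeff m n s)
      (pCoeff m n s) := funext fun s => HmatD_eq_pairing (hM n s)
  rw [← hβ, hH]
  exact hasDerivAt_pairing_self hn (fun k l => hsym k l t) (fun k l => hderiv k l t)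
    (fun s => isMonicOrthogonal_pCoeff (hM n s) (by omega))
    (differentiableAt_pCoeff (fun i j => (hderiv i j t).differentiableAt) (hM n t))
    (isMonicOrthogonal_pCoeff (hM (n + 1) t) (by omega))
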